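/- Let K ⊆ C(Ω) be compact in C(Ω), let Σ ⊆ C(Ω) and δ > 0 be such that every f ∈ K admits g ∈ Σ with ‖f − g‖_{C(Ω)} ≤ δ. Let f ∈ K and w := λ_x(f). Suppose f̂ ∈ Σ minimizes the loss L'_K(g) := ‖λ_x(g) − w‖ + dist(g,K)_{C(Ω)} over g ∈ Σ, where dist(g,K)_{C(Ω)} := inf_{h ∈ K} ‖g − h‖_{C(Ω)}. Then, with ε := 2δ, one has ‖j(f) − j(f̂)‖_X ≤ C_X ε + 2 R(K(w, 2ε))_X. -/
import Mathlib


/-- Chebyshev radius in `X` of the image under `J` of a set `S`: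
`R(S)_X = inf_{z ∈ X} sup_{f ∈ S} ‖J f - z‖`. -/
noncomputable def chebRadMap {A X : Type*} [NormedAddCommGroup X]
    (J : A → X) (S : Set A) : ℝ :=
  ⨅ z : X, ⨆ f : S, ‖J (f : A) - z‖

/-- Weighted euclidean norm on `ℝ^m`: `‖v‖ = ( m⁻¹ ∑ v_j² )^{1/2}`. -/
noncomputable def wNorm {m : ℕ} (v : Fin m → ℝ) : ℝ :=
  Real.sqrt ((∑ j, v j ^ 2) / m)

lemma wNorm_nonneg {m : ℕ} (v : Fin m → ℝ) : 0 ≤ wNorm v := Real.sqrt_nonneg _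

lemma wNorm_eq_norm {m : ℕ} (v : Fin m → ℝ) :
    wNorm v = ‖(WithLp.equiv 2 (Fin m → ℝ)).symm v‖ / Real.sqrt m := by
  rw [wNorm, EuclideanSpace.norm_eq,
    Real.sqrt_div (by positivity) (m : ℝ)]
  congr 2
  refine Finset.sum_congr rfl fun j _ => ?_
  simp [Real.norm_eq_abs, sq_abs]

lemma wNorm_add_le {m : ℕ} (u v : Fin m → ℝ) : wNorm (u + v) ≤ wNorm u + wNorm v := by
  rw [wNorm_eq_norm, wNorm_eq_norm, wNorm_eq_norm, ← add_div]
  have h : (WithLp.equiv 2 (Fin m → ℝ)).symm (u + v)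
      = (WithLp.equiv 2 (Fin m → ℝ)).symm u + (WithLp.equiv 2 (Fin m → ℝ)).symm v := rfl
  rw [h]
  gcongr
  exact norm_add_le _ _

lemma two_le_chebRad {A X : Type*} [NormedAddCommGroup X]
    (J : A → X) (S : Set A) (C : ℝ) (hC : ∀ u ∈ S, ‖J u‖ ≤ C)
    {a b : A} (ha : a ∈ S) (hb : b ∈ S) :
    ‖J a - J b‖ ≤ 2 * chebRadMap J S := by
  have key : ∀ z : X, ‖J a - J b‖ ≤ 2 * ⨆ f : S, ‖J (f : A) - z‖ := by
    intro z
    have hbdd : BddAbove (Set.range fun f : S => ‖J (f : A) - z‖) := by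
      refine ⟨C + ‖z‖, ?_⟩
      rintro r ⟨⟨u, hu⟩, rfl⟩
      calc ‖J u - z‖ ≤ ‖J u‖ + ‖z‖ := norm_sub_le _ _
        _ ≤ C + ‖z‖ := by gcongr; exact hC u hu
    have h1 : ‖J a - z‖ ≤ ⨆ f : S, ‖J (f : A) - z‖ := le_ciSup hbdd ⟨a, ha⟩
    have h2 : ‖J b - z‖ ≤ ⨆ f : S, ‖J (f : A) - z‖ := le_ciSup hbdd ⟨b, hb⟩
    calc ‖J a - J b‖ = ‖(J a - z) - (J b - z)‖ := by abel_nf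
      _ ≤ ‖J a - z‖ + ‖J b - z‖ := norm_sub_le _ _
      _ ≤ 2 * ⨆ f : S, ‖J (f : A) - z‖ := by linarith
  have : ‖J a - J b‖ / 2 ≤ ⨅ z : X, ⨆ f : S, ‖J (f : A) - z‖ :=
    le_ciInf fun z => by linarith [key z]
  rw [chebRadMap]
  linarith

lemma wNorm_le_norm {m : ℕ} (hm : 0 < m) {Y : Type*} [TopologicalSpace Y]
    [CompactSpace Y] (g h : C(Y, ℝ)) (x : Fin m → Y) :
    wNorm (fun j => g (x j) - h (x j)) ≤ ‖g - h‖ := by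
  have hm' : (0 : ℝ) < m := by exact_mod_cast hm
  have hb : ∀ j : Fin m, (g (x j) - h (x j)) ^ 2 ≤ ‖g - h‖ ^ 2 := by
    intro j
    have h1 : |g (x j) - h (x j)| ≤ ‖g - h‖ := by
      have := ContinuousMap.norm_coe_le_norm (g - h) (x j)
      simpa [Real.norm_eq_abs] using this
    calc (g (x j) - h (x j)) ^ 2 = |g (x j) - h (x j)| ^ 2 := (sq_abs _).symm
      _ ≤ ‖g - h‖ ^ 2 := pow_le_pow_left₀ (abs_nonneg _) h1 2
  have hsum : (∑ j, (g (x j) - h (x j)) ^ 2) ≤ m * ‖g - h‖ ^ 2 := by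
    calc (∑ j, (g (x j) - h (x j)) ^ 2) ≤ ∑ _j : Fin m, ‖g - h‖ ^ 2 :=
          Finset.sum_le_sum fun j _ => hb j
      _ = m * ‖g - h‖ ^ 2 := by simp [Finset.sum_const]
  have hdiv : (∑ j, (g (x j) - h (x j)) ^ 2) / m ≤ ‖g - h‖ ^ 2 := by
    rw [div_le_iff₀ hm']; linarith
  calc wNorm (fun j => g (x j) - h (x j)) ≤ Real.sqrt (‖g - h‖ ^ 2) :=
        Real.sqrt_le_sqrt hdiv
    _ = ‖g - h‖ := Real.sqrt_sq (norm_nonneg _)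

/-- Point-value data, general compact `K ⊆ C(Ω)`: a minimizer over `Σ` of
`L'_K(g) := ‖λ_x(g) − w‖ + dist(g,K)_{C(Ω)}` satisfies, with `ε := 2δ`,
`‖j(f) − j(f̂)‖_X ≤ C_X ε + 2 R(K(w, 2ε))_X`. -/
theorem stmt_9
    {d : ℕ} {Ω : Set (EuclideanSpace ℝ (Fin d))} [CompactSpace Ω]
    {X : Type*} [NormedAddCommGroup X] [NormedSpace ℝ X] [CompleteSpace X]
    {m : ℕ} (hm : 0 < m) (x : Fin m → Ω)
    (J : C(Ω, ℝ) →ₗ[ℝ] X) (hJinj : Function.Injective J)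
    (CX : ℝ) (hJ : ∀ g : C(Ω, ℝ), ‖J g‖ ≤ CX * ‖g‖)
    (K : Set C(Ω, ℝ)) (hK : IsCompact K)
    (Sig : Set C(Ω, ℝ)) (δ : ℝ) (hδ : 0 < δ)
    (happrox : ∀ f ∈ K, ∃ g ∈ Sig, ‖f - g‖ ≤ δ)
    (f : C(Ω, ℝ)) (hf : f ∈ K)
    (fhat : C(Ω, ℝ)) (hfhat : fhat ∈ Sig)
    (hmin : ∀ g ∈ Sig,
      wNorm (fun j => fhat (x j) - f (x j)) + Metric.infDist fhat K ≤
        wNorm (fun j => g (x j) - f (x j)) + Metric.infDist g K) :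
    ‖J f - J fhat‖ ≤ CX * (2 * δ) +
      2 * chebRadMap (fun u => J u)
        {u ∈ K | wNorm (fun j => u (x j) - f (x j)) ≤ 2 * (2 * δ)} := by
  set S := {u ∈ K | wNorm (fun j => u (x j) - f (x j)) ≤ 2 * (2 * δ)} with hS
  -- CX nonneg
  have hΩ : Nonempty Ω := ⟨x ⟨0, hm⟩⟩
  have hCX : 0 ≤ CX := by
    have h1 : ‖(1 : C(Ω, ℝ))‖ = 1 := by
      rw [ContinuousMap.norm_eq_iSup_norm]; simp
    have := hJ 1
    rw [h1, mul_one] at this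
    exact le_trans (norm_nonneg _) this
  -- minimizer bound
  obtain ⟨g, hgSig, hfg⟩ := happrox f hf
  have hgK : Metric.infDist g K ≤ ‖g - f‖ := by
    simpa [dist_eq_norm] using Metric.infDist_le_dist_of_mem (x := g) hf
  have hL : wNorm (fun j => fhat (x j) - f (x j)) + Metric.infDist fhat K ≤ 2 * δ := by
    have h1 := hmin g hgSig
    have h2 := wNorm_le_norm hm g f x
    have h3 : ‖g - f‖ ≤ δ := by rwa [norm_sub_rev] at hfg
    linarith
  have hA : wNorm (fun j => fhat (x j) - f (x j)) ≤ 2 * δ := by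
    have := Metric.infDist_nonneg (s := K) (x := fhat); linarith
  have hB : Metric.infDist fhat K ≤ 2 * δ := by
    have := wNorm_nonneg (fun j => fhat (x j) - f (x j)); linarith
  -- attain infDist
  obtain ⟨h, hhK, hdist⟩ := hK.exists_infDist_eq_dist ⟨f, hf⟩ fhat
  have hhfhat : ‖h - fhat‖ ≤ 2 * δ := by
    rw [norm_sub_rev, ← dist_eq_norm, ← hdist]; exact hB
  -- h ∈ S
  have hhS : h ∈ S := by
    refine ⟨hhK, ?_⟩
    have htri : wNorm (fun j => h (x j) - f (x j)) ≤
        wNorm (fun j => h (x j) - fhat (x j)) + wNorm (fun j => fhat (x j) - f (x j)) := by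
      have heq : (fun j => h (x j) - f (x j)) =
          (fun j => h (x j) - fhat (x j)) + (fun j => fhat (x j) - f (x j)) := by
        funext j; simp [Pi.add_apply]
      rw [heq]; exact wNorm_add_le _ _
    have h2 := wNorm_le_norm hm h fhat x
    linarith
  have hfS : f ∈ S := by
    refine ⟨hf, ?_⟩
    have : wNorm (fun j => f (x j) - f (x j)) = 0 := by
      simp [wNorm]
    rw [this]; positivity
  -- bound on S
  obtain ⟨r, hr⟩ := hK.isBounded.subset_closedBall 0
  have hbound : ∀ u ∈ S, ‖J u‖ ≤ CX * r := by
    intro u hu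
    have : ‖u‖ ≤ r := by
      have := hr hu.1; rwa [Metric.mem_closedBall, dist_zero_right] at this
    calc ‖J u‖ ≤ CX * ‖u‖ := hJ u
      _ ≤ CX * r := mul_le_mul_of_nonneg_left this hCX
  have hcheb : ‖J f - J h‖ ≤ 2 * chebRadMap (fun u => J u) S :=
    two_le_chebRad (fun u => J u) S (CX * r) hbound hfS hhS
  have hlast : ‖J h - J fhat‖ ≤ CX * (2 * δ) := by
    have : J h - J fhat = J (h - fhat) := (map_sub J h fhat).symm
    rw [this]
    calc ‖J (h - fhat)‖ ≤ CX * ‖h - fhat‖ := hJ _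
      _ ≤ CX * (2 * δ) := mul_le_mul_of_nonneg_left hhfhat hCX
  calc ‖J f - J fhat‖ ≤ ‖J f - J h‖ + ‖J h - J fhat‖ := norm_sub_le_norm_sub_add_norm_sub _ _ _
    _ ≤ CX * (2 * δ) + 2 * chebRadMap (fun u => J u) S := by linarith
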